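/- Let E be a finite-dimensional real inner product space. Let f : E → ℝ be differentiable with gradient ∇f that is Lipschitz with constant L > 0, let Ψ : E → ℝ be any function, let λ ≥ 0, set F_λ = f + λΨ, and fix η with 0 < η ≤ 1/(2L). Let (x^t)_{t≥0} be a sequence such that for every t, x^{t+1} is a global minimizer of z ↦ ηλΨ(z) + (1/2)‖z − (x^t − η∇f(x^t))‖². Suppose F_λ is bounded below by F* ∈ ℝ. Then for every T ≥ 1, Σ_{t=0}^{T−1} ‖x^{t+1} − x^t‖² ≤ 4η (F_λ(x^0) − F*); in particular, ‖x^{t+1} − x^t‖ → 0 as t → ∞. -/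

import Mathlib

/-!
Along the segment from `x` to `y`, the Lipschitz bound on the gradient gives the descent lemma
`f y ≤ f x + ⟪∇f x, y - x⟫ + (L/2)‖y - x‖²`. Comparing the proximal objective at `x^{t+1}` with its
value at `x^t` gives `λΨ(x^{t+1}) + ⟪∇f(x^t), d⟫ + ‖d‖²/(2η) ≤ λΨ(x^t)` for `d = x^{t+1} - x^t`;
adding the descent lemma and using `ηL ≤ 1/2` yields `‖d‖² ≤ 4η (F_λ(x^t) - F_λ(x^{t+1}))`, which
telescopes against the lower bound `F*`. A summable sequence of squares tends to `0`.
-/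

open Filter Topology

section

variable {E : Type*} [NormedAddCommGroup E] [InnerProductSpace ℝ E] {f : E → ℝ} {f' : E → E}

theorem hasDerivAt_comp_add_smul [CompleteSpace E] (hf : ∀ x, HasGradientAt f (f' x) x)
    (x d : E) (t : ℝ) :
    HasDerivAt (fun s : ℝ => f (x + s • d)) (inner ℝ (f' (x + t • d)) d) t := by
  have hline : HasDerivAt (fun s : ℝ => x + s • d) d t := by
    simpa using ((hasDerivAt_id t).smul_const d).const_add x
  exact (hf (x + t • d)).hasFDerivAt.comp_hasDerivAt t hline

theorem inner_gradient_sub_le {L : ℝ} (hlip : ∀ x y, ‖f' x - f' y‖ ≤ L * ‖x - y‖)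
    (x d : E) {t : ℝ} (ht : 0 ≤ t) :
    inner ℝ (f' (x + t • d) - f' x) d ≤ L * t * ‖d‖ ^ 2 :=
  calc inner ℝ (f' (x + t • d) - f' x) d
      ≤ ‖f' (x + t • d) - f' x‖ * ‖d‖ := real_inner_le_norm _ _
    _ ≤ L * ‖x + t • d - x‖ * ‖d‖ := by gcongr; exact hlip _ _
    _ = L * t * ‖d‖ ^ 2 := by
      rw [add_sub_cancel_left, norm_smul, Real.norm_of_nonneg ht]; ring

theorem le_add_inner_add_sq_of_lipschitz_gradient [CompleteSpace E]
    (hf : ∀ x, HasGradientAt f (f' x) x) {L : ℝ}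
    (hlip : ∀ x y, ‖f' x - f' y‖ ≤ L * ‖x - y‖) (x y : E) :
    f y ≤ f x + inner ℝ (f' x) (y - x) + L / 2 * ‖y - x‖ ^ 2 := by
  set d := y - x
  set φ : ℝ → ℝ := fun t => f (x + t • d) - t * inner ℝ (f' x) d - L * t ^ 2 / 2 * ‖d‖ ^ 2
  have hφ : ∀ t, HasDerivAt φ
      (inner ℝ (f' (x + t • d)) d - inner ℝ (f' x) d - L * t * ‖d‖ ^ 2) t := by
    intro t
    have hquad : HasDerivAt (fun s : ℝ => L * s ^ 2 / 2 * ‖d‖ ^ 2) (L * t * ‖d‖ ^ 2) t := by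
      refine ((((hasDerivAt_pow 2 t).const_mul L).div_const 2).mul_const (‖d‖ ^ 2)).congr_deriv ?_
      push_cast; ring
    exact ((hasDerivAt_comp_add_smul hf x d t).sub
      (hasDerivAt_mul_const (inner ℝ (f' x) d))).sub hquad
  have hanti : AntitoneOn φ (Set.Icc 0 1) := by
    refine antitoneOn_of_hasDerivWithinAt_nonpos (convex_Icc 0 1)
      (fun t _ => (hφ t).continuousAt.continuousWithinAt)
      (fun t _ => (hφ t).hasDerivWithinAt) fun t ht => ?_
    rw [interior_Icc] at ht
    have := inner_gradient_sub_le hlip x d ht.1.le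
    rw [inner_sub_left] at this
    linarith
  have h01 : f y - inner ℝ (f' x) d - L / 2 * ‖d‖ ^ 2 ≤ f x := by
    simpa [φ, d] using hanti (by simp) (by simp) zero_le_one
  linarith

theorem sq_norm_sub_le_of_prox_grad_step [CompleteSpace E]
    (hf : ∀ x, HasGradientAt f (f' x) x) {L : ℝ} (hlip : ∀ x y, ‖f' x - f' y‖ ≤ L * ‖x - y‖)
    (g : E → ℝ) {η : ℝ} (hη0 : 0 ≤ η) (hηL : η * L ≤ 1 / 2) {x y : E}
    (hy : η * g y + 1 / 2 * ‖y - (x - η • f' x)‖ ^ 2 ≤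
      η * g x + 1 / 2 * ‖x - (x - η • f' x)‖ ^ 2) :
    ‖y - x‖ ^ 2 ≤ 4 * η * ((f x + g x) - (f y + g y)) := by
  have hprox : η * g y + 1 / 2 * ‖y - x‖ ^ 2 + η * inner ℝ (f' x) (y - x) ≤ η * g x := by
    have hexpand : ‖y - (x - η • f' x)‖ ^ 2 =
        ‖y - x‖ ^ 2 + 2 * (η * inner ℝ (f' x) (y - x)) + ‖η • f' x‖ ^ 2 := by
      rw [show y - (x - η • f' x) = (y - x) + η • f' x by abel, norm_add_sq_real,
        real_inner_smul_right, real_inner_comm]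
    rw [hexpand, sub_sub_cancel] at hy
    linarith
  have hdescent := le_add_inner_add_sq_of_lipschitz_gradient hf hlip x y
  have hquad : η * (L / 2 * ‖y - x‖ ^ 2) ≤ 1 / 4 * ‖y - x‖ ^ 2 := by
    nlinarith [sq_nonneg ‖y - x‖]
  linarith [mul_le_mul_of_nonneg_left hdescent hη0]

end

theorem sum_range_le_of_le_mul_sub {a F : ℕ → ℝ} {c m : ℝ} (hc : 0 ≤ c)
    (hstep : ∀ t, a t ≤ c * (F t - F (t + 1))) (hm : ∀ t, m ≤ F t) (T : ℕ) :
    ∑ t ∈ Finset.range T, a t ≤ c * (F 0 - m) :=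
  calc ∑ t ∈ Finset.range T, a t
      ≤ ∑ t ∈ Finset.range T, c * (F t - F (t + 1)) := Finset.sum_le_sum fun t _ => hstep t
    _ = c * (F 0 - F T) := by rw [← Finset.mul_sum, Finset.sum_range_sub']
    _ ≤ c * (F 0 - m) := by gcongr; exact hm T

theorem tendsto_zero_of_sum_range_sq_le {u : ℕ → ℝ} (hu : ∀ t, 0 ≤ u t) {C : ℝ}
    (hC : ∀ T, ∑ t ∈ Finset.range T, u t ^ 2 ≤ C) : Tendsto u atTop (𝓝 0) := by
  have hsq : Tendsto (fun t => u t ^ 2) atTop (𝓝 0) :=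
    (summable_of_sum_range_le (fun t => sq_nonneg _) hC).tendsto_atTop_zero
  simpa [Real.sqrt_sq (hu _)] using hsq.sqrt

theorem prox_grad_successive_differences_general
    {E : Type*} [NormedAddCommGroup E] [InnerProductSpace ℝ E] [FiniteDimensional ℝ E]
    (f : E → ℝ) (f' : E → E) (hf : ∀ x, HasGradientAt f (f' x) x)
    (L : ℝ) (hlip : ∀ x y, ‖f' x - f' y‖ ≤ L * ‖x - y‖)
    (Ψ : E → ℝ) (lam : ℝ)
    (η : ℝ) (hη0 : 0 < η) (hη : η ≤ 1 / (2 * L))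
    (x : ℕ → E)
    (hprox : ∀ t : ℕ, ∀ z : E,
      η * lam * Ψ (x (t + 1)) + (1 / 2) * ‖x (t + 1) - (x t - η • f' (x t))‖ ^ 2 ≤
        η * lam * Ψ z + (1 / 2) * ‖z - (x t - η • f' (x t))‖ ^ 2)
    (Fstar : ℝ) (hbdd : ∀ y : E, Fstar ≤ f y + lam * Ψ y) :
    (∀ T : ℕ, 1 ≤ T →
      ∑ t ∈ Finset.range T, ‖x (t + 1) - x t‖ ^ 2 ≤
        4 * η * ((f (x 0) + lam * Ψ (x 0)) - Fstar)) ∧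
      Filter.Tendsto (fun t : ℕ => ‖x (t + 1) - x t‖) Filter.atTop (nhds 0) := by
  have hηL : η * L ≤ 1 / 2 := by
    rcases le_or_gt L 0 with hL | hL
    · nlinarith
    · rw [le_div_iff₀ (by positivity)] at hη
      linarith
  have hstep : ∀ t, ‖x (t + 1) - x t‖ ^ 2 ≤
      4 * η * ((f (x t) + lam * Ψ (x t)) - (f (x (t + 1)) + lam * Ψ (x (t + 1)))) := fun t =>
    sq_norm_sub_le_of_prox_grad_step hf hlip (fun z => lam * Ψ z) hη0.le hηL
      (by simpa only [mul_assoc] using hprox t (x t))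
  have hsum := sum_range_le_of_le_mul_sub (by positivity) hstep (fun t => hbdd (x t))
  exact ⟨fun T _ => hsum T, tendsto_zero_of_sum_range_sq_le (fun t => norm_nonneg _) hsum⟩

/-- Telescoped sufficient decrease for the proximal gradient method
(proof of Theorem 3.1): the squared successive differences are summable-bounded by
`4η (F_λ(x⁰) − F*)`, and in particular `‖x^{t+1} − x^t‖ → 0`. -/
theorem prox_grad_successive_differences
    {E : Type*} [NormedAddCommGroup E] [InnerProductSpace ℝ E] [FiniteDimensional ℝ E]
    (f : E → ℝ) (f' : E → E) (hf : ∀ x, HasGradientAt f (f' x) x)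
    (L : ℝ) (hL : 0 < L) (hlip : ∀ x y, ‖f' x - f' y‖ ≤ L * ‖x - y‖)
    (Ψ : E → ℝ) (lam : ℝ) (hlam : 0 ≤ lam)
    (η : ℝ) (hη0 : 0 < η) (hη : η ≤ 1 / (2 * L))
    (x : ℕ → E)
    (hprox : ∀ t : ℕ, ∀ z : E,
      η * lam * Ψ (x (t + 1)) + (1 / 2) * ‖x (t + 1) - (x t - η • f' (x t))‖ ^ 2 ≤
        η * lam * Ψ z + (1 / 2) * ‖z - (x t - η • f' (x t))‖ ^ 2)
    (Fstar : ℝ) (hbdd : ∀ y : E, Fstar ≤ f y + lam * Ψ y) :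
    (∀ T : ℕ, 1 ≤ T →
      ∑ t ∈ Finset.range T, ‖x (t + 1) - x t‖ ^ 2 ≤
        4 * η * ((f (x 0) + lam * Ψ (x 0)) - Fstar)) ∧
      Filter.Tendsto (fun t : ℕ => ‖x (t + 1) - x t‖) Filter.atTop (nhds 0) :=
  prox_grad_successive_differences_general f f' hf L hlip Ψ lam η hη0 hη x hprox Fstar hbdd
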